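/- Let B be a finite-dimensional Lie algebra over a field K of characteristic zero, w : B × B → B* a cyclic 2-cocycle, and T*_w B the T*-extension of B by w. For a subspace V ⊆ B write V° = {β ∈ B* : β(V) = 0}, and let rad w = {b ∈ B : w(b,b') = 0 for all b' ∈ B}. Then: (a) Z(B)° = span{β∘ad(b) : b ∈ B, β ∈ B*} and this subspace is contained in the derived algebra of T*_w B; (b) ([B,B])° = {β ∈ B* : β∘ad(b) = 0 for all b ∈ B}; (c) Z(T*_w B) ∩ B = Z(B) ∩ rad w and Z(T*_w B) ∩ B* = ([B,B])°; (d) span{w(b,b') : b,b' ∈ B} ⊆ (rad w)°. -/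

import Mathlib

/-!
In `T*_w B` the brackets with elements of `B*` and of `B` are
`[β, b' + β'] = β ∘ ad b'` and `[b, b' + β'] = [b, b'] + w(b, b') − β' ∘ ad b`;
(b) and (c) are read off from these. For (a), the coannihilator of `span {β ∘ ad b}` is `Z(B)`
because `B*` separates the points of `B`, and in finite dimension a subspace of `B*` is the
annihilator of its coannihilator; each `β ∘ ad b = [β, b]` is a bracket in `T*_w B`.
(d) is cyclicity: `w(b, b')(r) = w(r, b)(b')`, which vanishes for `r ∈ rad w`.
-/

open Module

variable {K B : Type*}

/-- The T*-extension bracket `[b+β, b'+β'] = [b,b'] + w(b,b') + ad*(b)(β') − ad*(b')(β)`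
on `B ⊕ B*`, where `ad*(b)(β) = −β ∘ ad(b)`. -/
def tLieBr [Field K] [LieRing B] [LieAlgebra K B]
    (w : B →ₗ[K] B →ₗ[K] Module.Dual K B)
    (X Y : B × Module.Dual K B) : B × Module.Dual K B :=
  (⁅X.1, Y.1⁆,
    w X.1 Y.1 + (-(Y.2 ∘ₗ (LieAlgebra.ad K B X.1))) - (-(X.2 ∘ₗ (LieAlgebra.ad K B Y.1))))

/-- The centre of a Lie algebra, as a submodule. -/
def centerSub (K B : Type*) [Field K] [LieRing B] [LieAlgebra K B] : Submodule K B where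
  carrier := {x | ∀ y : B, ⁅x, y⁆ = 0}
  add_mem' := by
    intro a b ha hb
    simp only [Set.mem_setOf_eq] at *
    intro y
    rw [add_lie, ha y, hb y, add_zero]
  zero_mem' := by
    simp only [Set.mem_setOf_eq]
    intro y
    simp
  smul_mem' := by
    intro c a ha
    simp only [Set.mem_setOf_eq] at *
    intro y
    rw [smul_lie, ha y, smul_zero]

/-- The derived algebra of a Lie algebra, as a submodule. -/
def derivedSub (K B : Type*) [Field K] [LieRing B] [LieAlgebra K B] : Submodule K B :=
  Submodule.span K {z | ∃ x y : B, z = ⁅x, y⁆}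

/-- The radical `rad w = {b ∈ B : w(b,b') = 0 for all b'}`, as a submodule. -/
def radSub (K B : Type*) [Field K] [AddCommGroup B] [Module K B]
    (w : B →ₗ[K] B →ₗ[K] Module.Dual K B) : Submodule K B where
  carrier := {b | ∀ b' : B, w b b' = 0}
  add_mem' := by
    intro a b ha hb
    simp only [Set.mem_setOf_eq] at *
    intro b'
    simp [map_add, ha b', hb b']
  zero_mem' := by
    simp only [Set.mem_setOf_eq]
    intro b'
    simp
  smul_mem' := by
    intro c a ha
    simp only [Set.mem_setOf_eq] at *
    intro b'
    simp [map_smul, ha b']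

section TStarExtension

variable [Field K] [LieRing B] [LieAlgebra K B]

lemma mem_dualAnnihilator_derivedSub_iff {β : Dual K B} :
    β ∈ (derivedSub K B).dualAnnihilator ↔ ∀ b : B, β ∘ₗ LieAlgebra.ad K B b = 0 := by
  rw [← SetLike.mem_coe, derivedSub, Submodule.coe_dualAnnihilator_span]
  simp only [Set.mem_ofPred_eq, Set.subset_def, forall_exists_index, LinearMap.ext_iff,
    LinearMap.comp_apply, LieAlgebra.ad_apply, LinearMap.zero_apply]
  exact ⟨fun h x y => h _ x y rfl, fun h _ x y hz => hz ▸ h x y⟩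

lemma dualCoannihilator_span_comp_ad :
    (Submodule.span K {β' : Dual K B |
      ∃ (b : B) (β : Dual K B), β' = β ∘ₗ LieAlgebra.ad K B b}).dualCoannihilator =
      centerSub K B := by
  ext x
  rw [← SetLike.mem_coe, Submodule.coe_dualCoannihilator_span]
  change (∀ φ ∈ _, (φ : Dual K B) x = 0) ↔ ∀ y : B, ⁅x, y⁆ = 0
  constructor
  · intro h y
    rw [← lie_skew, neg_eq_zero]
    exact (Module.forall_dual_apply_eq_zero_iff K _).1 fun β => h _ ⟨y, β, rfl⟩
  · rintro h _ ⟨b, β, rfl⟩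
    rw [LinearMap.comp_apply, LieAlgebra.ad_apply, ← lie_skew, h b, neg_zero, map_zero]

lemma dualAnnihilator_centerSub [FiniteDimensional K B] :
    (centerSub K B).dualAnnihilator = Submodule.span K {β' : Dual K B |
      ∃ (b : B) (β : Dual K B), β' = β ∘ₗ LieAlgebra.ad K B b} := by
  rw [← dualCoannihilator_span_comp_ad, Subspace.dualCoannihilator_dualAnnihilator_eq]

variable (w : B →ₗ[K] B →ₗ[K] Dual K B)

lemma tLieBr_inr (β : Dual K B) (Y : B × Dual K B) :
    tLieBr w (0, β) Y = (0, β ∘ₗ LieAlgebra.ad K B Y.1) := by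
  simp [tLieBr]

lemma tLieBr_inl (b : B) (Y : B × Dual K B) :
    tLieBr w (b, 0) Y = (⁅b, Y.1⁆, w b Y.1 - Y.2 ∘ₗ LieAlgebra.ad K B b) := by
  simp [tLieBr, sub_eq_add_neg]

lemma forall_tLieBr_inr_eq_zero_iff (β : Dual K B) :
    (∀ Y, tLieBr w (0, β) Y = 0) ↔ ∀ b : B, β ∘ₗ LieAlgebra.ad K B b = 0 := by
  simp [tLieBr_inr, Prod.ext_iff]

lemma forall_tLieBr_inl_eq_zero_iff (b : B) :
    (∀ Y, tLieBr w (b, 0) Y = 0) ↔ (∀ y : B, ⁅b, y⁆ = 0) ∧ ∀ b' : B, w b b' = 0 := by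
  simp only [tLieBr_inl, Prod.ext_iff, Prod.fst_zero, Prod.snd_zero, Prod.forall]
  refine ⟨fun h => ⟨fun y => (h y 0).1, fun b' => by simpa using (h b' 0).2⟩,
    fun ⟨hcen, hrad⟩ y η => ⟨hcen y, ?_⟩⟩
  have had : LieAlgebra.ad K B b = 0 := LinearMap.ext hcen
  rw [hrad, had, LinearMap.comp_zero, sub_zero]

lemma map_inr_span_comp_ad_le_span_tLieBr :
    (Submodule.span K {β' : Dual K B |
      ∃ (b : B) (β : Dual K B), β' = β ∘ₗ LieAlgebra.ad K B b}).map (LinearMap.inr K B _) ≤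
      Submodule.span K {z : B × Dual K B | ∃ X Y, z = tLieBr w X Y} := by
  rw [Submodule.map_span]
  refine Submodule.span_mono ?_
  rintro _ ⟨_, ⟨b, β, rfl⟩, rfl⟩
  exact ⟨(0, β), (b, 0), by rw [tLieBr_inr]; rfl⟩

lemma span_range_le_dualAnnihilator_radSub (hcyc : ∀ a b c : B, w a b c = w c a b) :
    Submodule.span K {β : Dual K B | ∃ b b' : B, β = w b b'} ≤
      (radSub K B w).dualAnnihilator := by
  rw [Submodule.span_le]
  rintro _ ⟨b, b', rfl⟩
  rw [SetLike.mem_coe, Submodule.mem_dualAnnihilator]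
  intro r hr
  rw [hcyc, hr b, LinearMap.zero_apply]

end TStarExtension

theorem stmt10_general [Field K] [LieRing B] [LieAlgebra K B] [FiniteDimensional K B]
    (w : B →ₗ[K] B →ₗ[K] Module.Dual K B)
    (hcyc : ∀ a b c : B, w a b c = w c a b ∧ w c a b = w b c a) :
    -- (a)
    ((Submodule.dualAnnihilator (centerSub K B) =
        Submodule.span K {β' : Module.Dual K B |
          ∃ (b : B) (β : Module.Dual K B), β' = β ∘ₗ (LieAlgebra.ad K B b)}) ∧
     (∀ β ∈ Submodule.dualAnnihilator (centerSub K B),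
        ((0 : B), β) ∈ Submodule.span K
          {z : B × Module.Dual K B | ∃ X Y, z = tLieBr w X Y})) ∧
    -- (b)
    ((Submodule.dualAnnihilator (derivedSub K B) : Set (Module.Dual K B)) =
      {β : Module.Dual K B | ∀ b : B, β ∘ₗ (LieAlgebra.ad K B b) = 0}) ∧
    -- (c)
    ({b : B | ∀ Y, tLieBr w ((b, (0 : Module.Dual K B))) Y = 0} =
      {b : B | (∀ y : B, ⁅b, y⁆ = 0) ∧ ∀ b' : B, w b b' = 0}) ∧
    ({β : Module.Dual K B | ∀ Y, tLieBr w (((0 : B), β)) Y = 0} =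
      (Submodule.dualAnnihilator (derivedSub K B) : Set (Module.Dual K B))) ∧
    -- (d)
    (Submodule.span K {β : Module.Dual K B | ∃ b b' : B, β = w b b'} ≤
      Submodule.dualAnnihilator (radSub K B w)) := by
  refine ⟨⟨dualAnnihilator_centerSub, fun β hβ => ?_⟩, ?_, ?_, ?_,
    span_range_le_dualAnnihilator_radSub w fun a b c => (hcyc a b c).1⟩
  · rw [dualAnnihilator_centerSub] at hβ
    exact map_inr_span_comp_ad_le_span_tLieBr w (Submodule.mem_map_of_mem hβ)
  · ext β
    exact mem_dualAnnihilator_derivedSub_iff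
  · ext b
    exact forall_tLieBr_inl_eq_zero_iff w b
  · ext β
    exact (forall_tLieBr_inr_eq_zero_iff w β).trans mem_dualAnnihilator_derivedSub_iff.symm

/-- Properties (a)–(d) of the centre, derived algebra and annihilators in a
T*-extension `T*_w B` of a Lie algebra `B` by a cyclic 2-cocycle `w`. -/
theorem stmt10 [Field K] [CharZero K] [LieRing B] [LieAlgebra K B] [FiniteDimensional K B]
    (w : B →ₗ[K] B →ₗ[K] Module.Dual K B)
    (hcyc : ∀ a b c : B, w a b c = w c a b ∧ w c a b = w b c a)
    (hskew : ∀ a b : B, w a b = - w b a)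
    (hcoc : ∀ a b c : B, w ⁅a, b⁆ c + w ⁅b, c⁆ a + w ⁅c, a⁆ b =
      -((w b c) ∘ₗ (LieAlgebra.ad K B a)) + -((w c a) ∘ₗ (LieAlgebra.ad K B b)) +
        -((w a b) ∘ₗ (LieAlgebra.ad K B c))) :
    -- (a)
    ((Submodule.dualAnnihilator (centerSub K B) =
        Submodule.span K {β' : Module.Dual K B |
          ∃ (b : B) (β : Module.Dual K B), β' = β ∘ₗ (LieAlgebra.ad K B b)}) ∧
     (∀ β ∈ Submodule.dualAnnihilator (centerSub K B),
        ((0 : B), β) ∈ Submodule.span K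
          {z : B × Module.Dual K B | ∃ X Y, z = tLieBr w X Y})) ∧
    -- (b)
    ((Submodule.dualAnnihilator (derivedSub K B) : Set (Module.Dual K B)) =
      {β : Module.Dual K B | ∀ b : B, β ∘ₗ (LieAlgebra.ad K B b) = 0}) ∧
    -- (c)
    ({b : B | ∀ Y, tLieBr w ((b, (0 : Module.Dual K B))) Y = 0} =
      {b : B | (∀ y : B, ⁅b, y⁆ = 0) ∧ ∀ b' : B, w b b' = 0}) ∧
    ({β : Module.Dual K B | ∀ Y, tLieBr w (((0 : B), β)) Y = 0} =
      (Submodule.dualAnnihilator (derivedSub K B) : Set (Module.Dual K B))) ∧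
    -- (d)
    (Submodule.span K {β : Module.Dual K B | ∃ b b' : B, β = w b b'} ≤
      Submodule.dualAnnihilator (radSub K B w)) :=
  stmt10_general w hcyc
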